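/- arXiv:0803.0690 — 2 statements merged into one kernel-verified Lean document; each statement's English description precedes it below -/
import Mathlib

section
/- Let a, b > 0 with ab = 1 and let L = aℤ × bℤ ⊂ ℝ² be the corresponding rectangular lattice of covolume 1. Then for every continuous L-periodic function f : ℝ² → ℝ with f > 0, the metric g = f²(dx²+dy²) satisfies area(g) − sys(g)² ≥ var(f). -/
open MeasureTheory intervalIntegral

/-- A path `γ : [0,1] → ℂ ≅ ℝ²` is piecewise `C¹` with derivative `γ'` if it is continuous
on `[0,1]` and there is a finite partition `0 = t₀ < t₁ < ⋯ < tₙ = 1` such that on each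
closed piece the derivative of `γ` extends to a continuous function agreeing with `γ'`
in the interior of the piece. -/
def IsPiecewiseC1Path (γ γ' : ℝ → ℂ) : Prop :=
  ContinuousOn γ (Set.Icc 0 1) ∧
  ∃ (n : ℕ) (t : ℕ → ℝ), 0 < n ∧ t 0 = 0 ∧ t n = 1 ∧
    (∀ i < n, t i < t (i + 1)) ∧
    ∀ i < n, ∃ d : ℝ → ℂ, ContinuousOn d (Set.Icc (t i) (t (i + 1))) ∧
      ∀ x ∈ Set.Ioo (t i) (t (i + 1)), HasDerivAt γ (d x) x ∧ γ' x = d x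

/-- The length of a path `γ` with derivative `γ'` in the conformal metric `f²(dx²+dy²)`. -/
noncomputable def gLength (f : ℂ → ℝ) (γ γ' : ℝ → ℂ) : ℝ :=
  ∫ t in (0:ℝ)..1, f (γ t) * ‖γ' t‖

/-- The systole of the metric `f²(dx²+dy²)` on the torus `ℝ²/L`: the infimum of lengths of
piecewise `C¹` paths whose endpoint difference is a nonzero lattice vector. -/
noncomputable def systole (L : Set ℂ) (f : ℂ → ℝ) : ℝ :=
  sInf { ℓ : ℝ | ∃ γ γ' : ℝ → ℂ, IsPiecewiseC1Path γ γ' ∧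
    γ 1 - γ 0 ∈ L ∧ γ 1 - γ 0 ≠ 0 ∧ ℓ = gLength f γ γ' }

/-!
The segments `u ↦ s·a + u·bi` and `u ↦ t·bi + u·a`, `u ∈ [0,1]`, join points differing by a
lattice vector, so each has length at least `sys`. Averaging over `s` resp. `t ∈ [0,1]` turns
their lengths into `|b|·mean` and `|a|·mean`, whence `sys² ≤ |ab|·mean² = mean²`. On the unit
square with its uniform probability measure, `area − mean² = var`.
-/

open Complex ProbabilityTheory

lemma isPiecewiseC1Path_segment (z₀ v : ℂ) :
    IsPiecewiseC1Path (fun u : ℝ => z₀ + u * v) (fun _ => v) := by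
  refine ⟨by fun_prop, 1, fun i => i, one_pos, by simp, by simp, by simp, fun i _ => ?_⟩
  refine ⟨fun _ => v, continuousOn_const, fun x _ => ⟨?_, rfl⟩⟩
  simpa using ((hasDerivAt_id x).ofReal_comp.mul_const v).const_add z₀

section Systole

variable {L : Set ℂ} {f : ℂ → ℝ}

lemma gLength_nonneg (hf : ∀ z, 0 ≤ f z) (γ γ' : ℝ → ℂ) : 0 ≤ gLength f γ γ' :=
  integral_nonneg zero_le_one fun _ _ => mul_nonneg (hf _) (norm_nonneg _)

lemma systole_nonneg (hf : ∀ z, 0 ≤ f z) : 0 ≤ systole L f :=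
  Real.sInf_nonneg <| by
    rintro ℓ ⟨γ, γ', -, -, -, rfl⟩
    exact gLength_nonneg hf γ γ'

lemma systole_le_norm_mul_integral_segment (hf : ∀ z, 0 ≤ f z) {v : ℂ} (hv : v ∈ L)
    (hv0 : v ≠ 0) (z₀ : ℂ) :
    systole L f ≤ ‖v‖ * ∫ u in (0:ℝ)..1, f (z₀ + u * v) := by
  refine csInf_le ⟨0, ?_⟩ ⟨_, _, isPiecewiseC1Path_segment z₀ v, by simpa, by simpa, ?_⟩
  · rintro ℓ ⟨γ, γ', -, -, -, rfl⟩
    exact gLength_nonneg hf γ γ'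
  · rw [gLength, ← intervalIntegral.integral_const_mul]
    simp only [mul_comm]

lemma systole_le_norm_mul_integral_integral (hf : Continuous f) (hf0 : ∀ z, 0 ≤ f z)
    {v : ℂ} (hv : v ∈ L) (hv0 : v ≠ 0) {z₀ : ℝ → ℂ} (hz₀ : Continuous z₀) :
    systole L f ≤ ‖v‖ * ∫ s in (0:ℝ)..1, ∫ u in (0:ℝ)..1, f (z₀ s + u * v) := by
  have hcont : Continuous fun s => ∫ u in (0:ℝ)..1, f (z₀ s + u * v) :=
    continuous_parametric_intervalIntegral_of_continuous' (by fun_prop) 0 1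
  calc systole L f = ∫ _ in (0:ℝ)..1, systole L f := by simp
    _ ≤ ∫ s in (0:ℝ)..1, ‖v‖ * ∫ u in (0:ℝ)..1, f (z₀ s + u * v) :=
      integral_mono_on zero_le_one intervalIntegrable_const
        ((continuous_const.mul hcont).intervalIntegrable 0 1)
        fun s _ => systole_le_norm_mul_integral_segment hf0 hv hv0 (z₀ s)
    _ = _ := intervalIntegral.integral_const_mul _ _

end Systole

section UnitSquare

noncomputable abbrev unitSquare : Measure (ℝ × ℝ) :=
  (volume.restrict (Set.Ioc (0:ℝ) 1)).prod (volume.restrict (Set.Ioc (0:ℝ) 1))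

instance : IsProbabilityMeasure (volume.restrict (Set.Ioc (0:ℝ) 1)) := ⟨by simp⟩

lemma Continuous.integrable_unitSquare {F : ℝ × ℝ → ℝ} (hF : Continuous F) :
    Integrable F unitSquare := by
  rw [unitSquare, Measure.prod_restrict]
  exact (hF.continuousOn.integrableOn_compact (isCompact_Icc.prod isCompact_Icc)).mono_set
    (Set.prod_mono Set.Ioc_subset_Icc_self Set.Ioc_subset_Icc_self)

variable {φ : ℝ → ℝ → ℝ}

lemma integral_integral_eq_integral_unitSquare (hφ : Continuous (Function.uncurry φ)) :
    ∫ s in (0:ℝ)..1, ∫ t in (0:ℝ)..1, φ s t = ∫ p, Function.uncurry φ p ∂unitSquare := by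
  simp only [integral_of_le zero_le_one]
  exact (integral_prod _ hφ.integrable_unitSquare).symm

lemma integral_integral_swap_eq_integral_unitSquare (hφ : Continuous (Function.uncurry φ)) :
    ∫ t in (0:ℝ)..1, ∫ s in (0:ℝ)..1, φ s t = ∫ p, Function.uncurry φ p ∂unitSquare := by
  simp only [integral_of_le zero_le_one]
  exact (integral_prod_symm _ hφ.integrable_unitSquare).symm

end UnitSquare

lemma integral_sub_integral_sq {Ω : Type*} [MeasurableSpace Ω] {μ : Measure Ω}
    [IsProbabilityMeasure μ] {X : Ω → ℝ} (hX : MemLp X 2 μ) :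
    ∫ ω, (X ω - ∫ x, X x ∂μ) ^ 2 ∂μ = ∫ ω, X ω ^ 2 ∂μ - (∫ x, X x ∂μ) ^ 2 := by
  rw [← variance_eq_integral hX.aemeasurable, variance_eq_sub hX]
  rfl

theorem loewner_rectangular_lattice_general
    (a b : ℝ) (hab : a * b = 1)
    (L : Set ℂ)
    (hL : L = {z : ℂ | ∃ m n : ℤ, z = (m : ℂ) * (a : ℂ) + (n : ℂ) * (b : ℂ) * Complex.I})
    (f : ℂ → ℝ) (hf : Continuous f) (hfpos : ∀ z, 0 < f z)
    (area mean var : ℝ)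
    (harea : area = ∫ s in (0:ℝ)..1, ∫ t in (0:ℝ)..1,
      (f ((s : ℂ) * (a : ℂ) + (t : ℂ) * (b : ℂ) * Complex.I)) ^ 2)
    (hmean : mean = ∫ s in (0:ℝ)..1, ∫ t in (0:ℝ)..1,
      f ((s : ℂ) * (a : ℂ) + (t : ℂ) * (b : ℂ) * Complex.I))
    (hvar : var = ∫ s in (0:ℝ)..1, ∫ t in (0:ℝ)..1,
      (f ((s : ℂ) * (a : ℂ) + (t : ℂ) * (b : ℂ) * Complex.I) - mean) ^ 2) :
    area - systole L f ^ 2 ≥ var := by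
  let φ : ℝ → ℝ → ℝ := fun s t => f (s * a + t * b * I)
  have hφ : Continuous (Function.uncurry φ) := by fun_prop
  have hf0 : ∀ z, 0 ≤ f z := fun z => (hfpos z).le
  have haL : (a : ℂ) ∈ L := hL ▸ ⟨1, 0, by simp⟩
  have hbL : (b : ℂ) * I ∈ L := hL ▸ ⟨0, 1, by simp⟩
  have ha0 : (a : ℂ) ≠ 0 := by simpa using left_ne_zero_of_mul_eq_one hab
  have hb0 : (b : ℂ) * I ≠ 0 := by simpa using right_ne_zero_of_mul_eq_one hab
  have hsys_b : systole L f ≤ ‖(b : ℂ) * I‖ * mean := by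
    simpa only [mul_assoc, hmean] using
      systole_le_norm_mul_integral_integral hf hf0 hbL hb0 (z₀ := fun s => s * a) (by fun_prop)
  have hsys_a : systole L f ≤ ‖(a : ℂ)‖ * mean := by
    rw [hmean, integral_integral_eq_integral_unitSquare hφ,
      ← integral_integral_swap_eq_integral_unitSquare hφ]
    simpa only [add_comm] using
      systole_le_norm_mul_integral_integral hf hf0 haL ha0 (z₀ := fun t => t * b * I) (by fun_prop)
  have hab_norm : ‖(a : ℂ)‖ * ‖(b : ℂ) * I‖ = 1 := by
    simp [← abs_mul, hab]
  have hvar_eq : var = area - mean ^ 2 := by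
    have hφ2 : MemLp (Function.uncurry φ) 2 unitSquare :=
      (memLp_two_iff_integrable_sq hφ.aestronglyMeasurable).2 (hφ.pow 2).integrable_unitSquare
    rw [hvar, harea, hmean, integral_integral_eq_integral_unitSquare hφ,
      integral_integral_eq_integral_unitSquare (φ := fun s t => (φ s t - _) ^ 2) (by fun_prop),
      integral_integral_eq_integral_unitSquare (φ := fun s t => φ s t ^ 2) (by fun_prop)]
    exact integral_sub_integral_sq hφ2
  have hsys0 := systole_nonneg (L := L) hf0
  rw [hvar_eq]
  nlinarith [mul_le_mul hsys_a hsys_b hsys0 (hsys0.trans hsys_a)]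

/-- **Loewner's inequality with defect for rectangular lattices.**
For the rectangular unit-covolume lattice `L = aℤ × bℤ` (with `a, b > 0`, `ab = 1`),
every metric `g = f²(dx²+dy²)` with continuous positive `L`-periodic conformal factor `f`
satisfies `area(g) − sys(g)² ≥ var(f)`. -/
theorem loewner_rectangular_lattice
    (a b : ℝ) (ha : 0 < a) (hb : 0 < b) (hab : a * b = 1)
    (L : Set ℂ)
    (hL : L = {z : ℂ | ∃ m n : ℤ, z = (m : ℂ) * (a : ℂ) + (n : ℂ) * (b : ℂ) * Complex.I})
    (f : ℂ → ℝ) (hf : Continuous f) (hfpos : ∀ z, 0 < f z)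
    (hper : ∀ z ∈ L, ∀ x : ℂ, f (x + z) = f x)
    (area mean var : ℝ)
    (harea : area = ∫ s in (0:ℝ)..1, ∫ t in (0:ℝ)..1,
      (f ((s : ℂ) * (a : ℂ) + (t : ℂ) * (b : ℂ) * Complex.I)) ^ 2)
    (hmean : mean = ∫ s in (0:ℝ)..1, ∫ t in (0:ℝ)..1,
      f ((s : ℂ) * (a : ℂ) + (t : ℂ) * (b : ℂ) * Complex.I))
    (hvar : var = ∫ s in (0:ℝ)..1, ∫ t in (0:ℝ)..1,
      (f ((s : ℂ) * (a : ℂ) + (t : ℂ) * (b : ℂ) * Complex.I) - mean) ^ 2) :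
    area - systole L f ^ 2 ≥ var :=
  loewner_rectangular_lattice_general a b hab L hL f hf hfpos area mean var harea hmean hvar
end

section
/- Let F : ℝ → ℝ be a continuous 1-periodic function with F > 0, and define f : ℝ² → ℝ by f(x,y) = F(y). Then the systole of the metric g = f²(dx²+dy²) on the unit square torus ℝ²/ℤ² equals the minimum of F: sys(g) = min_{y∈[0,1]} F(y). -/
open MeasureTheory intervalIntegral

/-!
By periodicity the minimum `m = F y₀` of `F` on `[0,1]` is its global minimum. The horizontal
segment at height `y₀` from `y₀ i` to `1 + y₀ i` has length `m`. Conversely, since `f ≥ m`, the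
length of any path is at least `m` times its Euclidean length, hence at least `m` times the
distance between its endpoints, which is at least `1` for two points differing by a nonzero
vector of `ℤ²`.
-/

open Set Complex

section Piece

variable {E : Type*} [NormedAddCommGroup E] {f : E → ℝ} {γ γ' d : ℝ → E} {a b : ℝ}

theorem intervalIntegrable_comp_mul_norm_of_eqOn_Ioo (hf : Continuous f) (hab : a ≤ b)
    (hγ : ContinuousOn γ (Icc a b)) (hd : ContinuousOn d (Icc a b))
    (hγ' : EqOn γ' d (Ioo a b)) :
    IntervalIntegrable (fun t => f (γ t) * ‖γ' t‖) volume a b := by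
  have hint : IntervalIntegrable (fun t => f (γ t) * ‖d t‖) volume a b :=
    ((hf.comp_continuousOn hγ).mul hd.norm).intervalIntegrable_of_Icc hab
  exact hint.congr_uIoo fun x hx => by rw [hγ' (uIoo_of_le hab ▸ hx)]

variable [NormedSpace ℝ E] [CompleteSpace E]

theorem mul_norm_sub_le_integral_comp_mul_norm {m : ℝ} (hf : Continuous f) (hm : 0 ≤ m)
    (hfm : ∀ z, m ≤ f z) (hab : a ≤ b) (hγ : ContinuousOn γ (Icc a b))
    (hd : ContinuousOn d (Icc a b)) (hder : ∀ x ∈ Ioo a b, HasDerivAt γ (d x) x ∧ γ' x = d x) :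
    m * ‖γ b - γ a‖ ≤ ∫ t in a..b, f (γ t) * ‖γ' t‖ := by
  have hdint : IntervalIntegrable d volume a b := hd.intervalIntegrable_of_Icc hab
  have hftc : ∫ t in a..b, d t = γ b - γ a :=
    integral_eq_sub_of_hasDeriv_right_of_le hab hγ
      (fun x hx => (hder x hx).1.hasDerivWithinAt) hdint
  have hγ'd : ∫ t in a..b, f (γ t) * ‖γ' t‖ = ∫ t in a..b, f (γ t) * ‖d t‖ :=
    integral_congr_uIoo fun x hx => by rw [(hder x (uIoo_of_le hab ▸ hx)).2]
  calc m * ‖γ b - γ a‖ = m * ‖∫ t in a..b, d t‖ := by rw [hftc]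
    _ ≤ m * ∫ t in a..b, ‖d t‖ := by gcongr; exact norm_integral_le_integral_norm hab
    _ = ∫ t in a..b, m * ‖d t‖ := (intervalIntegral.integral_const_mul _ _).symm
    _ ≤ ∫ t in a..b, f (γ t) * ‖d t‖ :=
        integral_mono_on hab (hdint.norm.const_mul m)
          (((hf.comp_continuousOn hγ).mul hd.norm).intervalIntegrable_of_Icc hab)
          fun x _ => by gcongr; exact hfm _
    _ = ∫ t in a..b, f (γ t) * ‖γ' t‖ := hγ'd.symm

end Piece

theorem IsPiecewiseC1Path.mul_norm_sub_le_gLength {f : ℂ → ℝ} {m : ℝ} {γ γ' : ℝ → ℂ}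
    (hγ : IsPiecewiseC1Path γ γ') (hf : Continuous f) (hm : 0 ≤ m) (hfm : ∀ z, m ≤ f z) :
    m * ‖γ 1 - γ 0‖ ≤ gLength f γ γ' := by
  obtain ⟨hγc, n, t, -, ht0, htn, ht, hpiece⟩ := hγ
  choose d hd hder using hpiece
  have hmono : MonotoneOn t (Iic n) :=
    (strictMonoOn_Iic_of_lt_succ fun i hi => ht i hi).monotoneOn
  have hsub : ∀ i < n, Icc (t i) (t (i + 1)) ⊆ Icc 0 1 := fun i hi =>
    Icc_subset_Icc (ht0 ▸ hmono (Nat.zero_le n) hi.le (Nat.zero_le i))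
      (htn ▸ hmono (Nat.succ_le_of_lt hi) self_mem_Iic (Nat.succ_le_of_lt hi))
  have hpieceBound : ∀ i < n, m * ‖γ (t (i + 1)) - γ (t i)‖ ≤
      ∫ s in t i..t (i + 1), f (γ s) * ‖γ' s‖ := fun i hi =>
    mul_norm_sub_le_integral_comp_mul_norm hf hm hfm (ht i hi).le (hγc.mono (hsub i hi))
      (hd i hi) (hder i hi)
  have hint : ∀ i < n, IntervalIntegrable (fun s => f (γ s) * ‖γ' s‖) volume (t i) (t (i + 1)) :=
    fun i hi => intervalIntegrable_comp_mul_norm_of_eqOn_Ioo hf (ht i hi).le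
      (hγc.mono (hsub i hi)) (hd i hi) fun x hx => (hder i hi x hx).2
  calc m * ‖γ 1 - γ 0‖ = m * ‖∑ i ∈ Finset.range n, (γ (t (i + 1)) - γ (t i))‖ := by
        rw [Finset.sum_range_sub (fun i => γ (t i)), ht0, htn]
    _ ≤ ∑ i ∈ Finset.range n, m * ‖γ (t (i + 1)) - γ (t i)‖ := by
        rw [← Finset.mul_sum]; gcongr; exact norm_sum_le _ _
    _ ≤ ∑ i ∈ Finset.range n, ∫ s in t i..t (i + 1), f (γ s) * ‖γ' s‖ :=
        Finset.sum_le_sum fun i hi => hpieceBound i (Finset.mem_range.mp hi)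
    _ = gLength f γ γ' := by rw [sum_integral_adjacent_intervals hint, ht0, htn, gLength]

theorem isPiecewiseC1Path_affine (z w : ℂ) :
    IsPiecewiseC1Path (fun t => z + t * w) (fun _ => w) := by
  refine ⟨by fun_prop, 1, fun i => i, one_pos, by simp, by simp, by simp, fun i _ => ?_⟩
  refine ⟨fun _ => w, continuousOn_const, fun x _ => ⟨?_, rfl⟩⟩
  simpa using ((hasDerivAt_id x).ofReal_comp.mul_const w).const_add z

theorem Complex.one_le_norm_intCast_add_intCast_mul_I {p q : ℤ} (h : (p : ℂ) + q * I ≠ 0) :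
    1 ≤ ‖(p : ℂ) + q * I‖ := by
  by_cases hp : p = 0
  · have hq : q ≠ 0 := by rintro rfl; simp [hp] at h
    calc (1 : ℝ) ≤ |(q : ℝ)| := by exact_mod_cast Int.one_le_abs hq
      _ = |((p : ℂ) + q * I).im| := by simp
      _ ≤ _ := abs_im_le_norm _
  · calc (1 : ℝ) ≤ |(p : ℝ)| := by exact_mod_cast Int.one_le_abs hp
      _ = |((p : ℂ) + q * I).re| := by simp
      _ ≤ _ := abs_re_le_norm _

/-- **Systole of a one-variable conformal metric on the square torus.**
If the conformal factor `f(x,y) = F(y)` on `ℝ²/ℤ²` depends only on one variable, then the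
systole of `g = f²(dx²+dy²)` equals the minimum of `F` over `[0,1]`. -/
theorem systole_eq_min_of_one_variable
    (F : ℝ → ℝ) (hF : Continuous F) (hFper : ∀ y : ℝ, F (y + 1) = F y)
    (hFpos : ∀ y, 0 < F y)
    (f : ℂ → ℝ) (hfdef : ∀ z : ℂ, f z = F z.im)
    (L : Set ℂ) (hL : L = {z : ℂ | ∃ m n : ℤ, z = (m : ℂ) + (n : ℂ) * Complex.I}) :
    systole L f = sInf (F '' Set.Icc (0:ℝ) 1) := by
  have hper : Function.Periodic F 1 := hFper
  obtain ⟨_, ⟨y₀, rfl⟩, hmin⟩ :=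
    (hper.compact_of_continuous one_ne_zero hF).exists_isLeast (range_nonempty F)
  have hrange : F '' Icc 0 1 = range F := by simpa using hper.image_Icc one_pos 0
  rw [hrange, IsLeast.csInf_eq ⟨mem_range_self y₀, hmin⟩]
  have hfm : ∀ z, F y₀ ≤ f z := fun z => hfdef z ▸ hmin (mem_range_self _)
  have hf : Continuous f := by rw [funext hfdef]; fun_prop
  refine IsLeast.csInf_eq ⟨?_, ?_⟩
  · refine ⟨fun t => y₀ * I + t * 1, fun _ => 1, isPiecewiseC1Path_affine _ _, ?_, by simp, ?_⟩
    · rw [hL]; exact ⟨1, 0, by simp⟩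
    · simp [gLength, hfdef]
  · rintro ℓ ⟨γ, γ', hγ, hγL, hne, rfl⟩
    rw [hL] at hγL
    obtain ⟨p, q, hpq⟩ := hγL
    calc F y₀ ≤ F y₀ * ‖γ 1 - γ 0‖ := le_mul_of_one_le_right (hFpos y₀).le
          (hpq ▸ one_le_norm_intCast_add_intCast_mul_I (hpq ▸ hne))
      _ ≤ gLength f γ γ' := hγ.mul_norm_sub_le_gLength hf (hFpos y₀).le hfm
end
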